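/- arXiv:2106.13853 — 2 statements merged into one kernel-verified Lean document; each statement's English description precedes it below -/
import Mathlib

section
/- Let f : E → ℝ be differentiable, μ-strongly convex and L-smooth on X, with minimizer x* over X. Fix α ≥ L, γ ∈ (0, 2μ), δ ≥ 0, and an integer J ≥ 1; set η = (α − μ)/(α + μ − γ) and β = 1/(γ(α + μ − γ)). Let w₀ ∈ X and, for j = 1, …, J, let wⱼ = Proj_X(w_{j−1} − (1/α)gⱼ) for some gⱼ ∈ E satisfying ‖gⱼ − ∇f(w_{j−1})‖ ≤ δ. Then ‖w_J − x*‖ ≤ η^{J/2} ‖w₀ − x*‖ + ((1 − η^{J/2})/(1 − √η)) √β δ. -/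
/-!
Each step contracts the squared distance to the minimizer: adding the α-smoothness bound at
`w_{j-1}`, the strong convexity bounds at `w_{j-1}` and at `x*` (the latter combined with the
first-order optimality of `x*`), and the obtuse-angle property of the projection gives
`(α + μ − γ) ‖w_j − x*‖² ≤ (α − μ) ‖w_{j-1} − x*‖² + δ²/γ`, the gradient error being absorbed
by Young's inequality `δ ‖w_j − x*‖ ≤ (γ/2) ‖w_j − x*‖² + δ²/(2γ)`. Taking square roots gives
`‖w_j − x*‖ ≤ √η ‖w_{j-1} − x*‖ + √β δ`, and unrolling this recursion sums a geometric series.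
When `α < μ` the set `X` is a single point and there is nothing to prove.
-/

open scoped RealInnerProductSpace

open Finset

section FirstOrder

variable {E : Type*} [NormedAddCommGroup E] [InnerProductSpace ℝ E]

theorem inner_sub_nonpos_of_forall_norm_sub_le {K : Set E} (hK : Convex ℝ K) {u v : E}
    (hv : v ∈ K) (hmin : ∀ w ∈ K, ‖u - v‖ ≤ ‖u - w‖) {w : E} (hw : w ∈ K) :
    ⟪u - v, w - v⟫ ≤ 0 := by
  have : Nonempty K := ⟨⟨v, hv⟩⟩
  have hinf : ‖u - v‖ = ⨅ w : K, ‖u - w‖ :=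
    le_antisymm (le_ciInf fun w => hmin w w.2)
      (ciInf_le (f := fun w : K => ‖u - w‖) ⟨0, Set.forall_mem_range.2 fun _ => norm_nonneg _⟩
        ⟨v, hv⟩)
  exact (norm_eq_iInf_iff_real_inner_le_zero hK hv).1 hinf w hw

variable [CompleteSpace E]

def FirstOrderStrongConvexOn (X : Set E) (f : E → ℝ) (μ : ℝ) : Prop :=
  ∀ a ∈ X, ∀ b ∈ X, f a + ⟪gradient f a, b - a⟫ + μ / 2 * ‖b - a‖ ^ 2 ≤ f b

def FirstOrderSmoothOn (X : Set E) (f : E → ℝ) (L : ℝ) : Prop :=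
  ∀ a ∈ X, ∀ b ∈ X, f b ≤ f a + ⟪gradient f a, b - a⟫ + L / 2 * ‖b - a‖ ^ 2

variable {X : Set E} {f : E → ℝ}

theorem FirstOrderSmoothOn.mono {L α : ℝ} (h : FirstOrderSmoothOn X f L) (hLα : L ≤ α) :
    FirstOrderSmoothOn X f α := fun a ha b hb =>
  (h a ha b hb).trans (by gcongr)

theorem FirstOrderStrongConvexOn.subsingleton_of_smoothOn_of_lt {μ L : ℝ}
    (hsc : FirstOrderStrongConvexOn X f μ) (hsm : FirstOrderSmoothOn X f L) (hLμ : L < μ) :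
    X.Subsingleton := by
  intro a ha b hb
  have hsq : (μ - L) * ‖b - a‖ ^ 2 ≤ 0 := by linarith [hsc a ha b hb, hsm a ha b hb]
  have hnorm : ‖b - a‖ ^ 2 = 0 :=
    le_antisymm (nonpos_of_mul_nonpos_right hsq (by linarith)) (sq_nonneg _)
  simpa [sub_eq_zero, eq_comm] using hnorm

theorem IsMinOn.inner_gradient_sub_nonneg {a v : E} (hmin : IsMinOn f X a) (hX : Convex ℝ X)
    (hf : DifferentiableAt ℝ f a) (ha : a ∈ X) (hv : v ∈ X) :
    0 ≤ ⟪gradient f a, v - a⟫ := by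
  rw [inner_gradient_left]
  exact hmin.localize.hasFDerivWithinAt_nonneg hf.hasFDerivAt.hasFDerivWithinAt
    (sub_mem_posTangentConeAt_of_segment_subset (hX.segment_subset ha hv))

end FirstOrder

section Arithmetic

theorem le_pow_mul_add_geom_sum_mul {a : ℕ → ℝ} {s c : ℝ} (hs : 0 ≤ s) {N : ℕ}
    (h : ∀ n < N, a (n + 1) ≤ s * a n + c) :
    a N ≤ s ^ N * a 0 + (∑ i ∈ range N, s ^ i) * c := by
  induction N with
  | zero => simp
  | succ n ih =>
    calc a (n + 1) ≤ s * a n + c := h n n.lt_succ_self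
      _ ≤ s * (s ^ n * a 0 + (∑ i ∈ range n, s ^ i) * c) + c := by
        gcongr
        exact ih fun m hm => h m (hm.trans n.lt_succ_self)
      _ = s ^ (n + 1) * a 0 + (∑ i ∈ range (n + 1), s ^ i) * c := by
        rw [geom_sum_succ]; ring

theorem le_sqrt_mul_add_sqrt_mul {a b η β δ : ℝ} (ha : 0 ≤ a) (hb : 0 ≤ b) (hη : 0 ≤ η)
    (hβ : 0 ≤ β) (hδ : 0 ≤ δ) (h : b ^ 2 ≤ η * a ^ 2 + β * δ ^ 2) :
    b ≤ √η * a + √β * δ := by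
  have hsq : b ^ 2 ≤ (√η * a + √β * δ) ^ 2 := by
    nlinarith [Real.sq_sqrt hη, Real.sq_sqrt hβ, Real.sqrt_nonneg η, Real.sqrt_nonneg β,
      mul_nonneg (mul_nonneg (Real.sqrt_nonneg η) ha) (mul_nonneg (Real.sqrt_nonneg β) hδ)]
  exact (pow_le_pow_iff_left₀ hb (by positivity) two_ne_zero).1 hsq

theorem div_ne_one_of_lt_two_mul {α μ γ : ℝ} (hγ : γ < 2 * μ) :
    (α - μ) / (α + μ - γ) ≠ 1 := by
  intro h
  have hd : α + μ - γ ≠ 0 := by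
    rintro hd
    simp [hd] at h
  rw [div_eq_one_iff_eq hd] at h
  linarith

end Arithmetic

section ProjectedGradientStep

variable {E : Type*} [NormedAddCommGroup E] [InnerProductSpace ℝ E] {α : ℝ} {xs x g y : E}

theorem two_mul_inner_le_of_projection (hα : 0 < α)
    (hproj : ⟪(x - (1 / α) • g) - y, xs - y⟫ ≤ 0) :
    2 * ⟪g, y - xs⟫ ≤ α * (‖x - xs‖ ^ 2 - ‖y - x‖ ^ 2 - ‖y - xs‖ ^ 2) := by
  have hexpand : ⟪(x - (1 / α) • g) - y, xs - y⟫ = (1 / α) * ⟪g, y - xs⟫ - ⟪x - y, y - xs⟫ := by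
    rw [show (x - (1 / α) • g) - y = (x - y) - (1 / α) • g by abel,
      show xs - y = -(y - xs) by abel, inner_neg_right, inner_sub_left, real_inner_smul_left]
    ring
  have hpolar : 2 * ⟪x - y, y - xs⟫ = ‖x - xs‖ ^ 2 - ‖y - x‖ ^ 2 - ‖y - xs‖ ^ 2 := by
    have h := norm_add_sq_real (x - y) (y - xs)
    rw [show x - y + (y - xs) = x - xs by abel, norm_sub_rev x y] at h
    linarith
  have hscaled : ⟪g, y - xs⟫ ≤ α * ⟪x - y, y - xs⟫ := by
    have h : (1 / α) * ⟪g, y - xs⟫ ≤ ⟪x - y, y - xs⟫ := by linarith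
    rwa [one_div, inv_mul_le_iff₀ hα] at h
  rw [← hpolar]
  linarith

variable [CompleteSpace E] {X : Set E} {f : E → ℝ} {μ γ δ : ℝ}

theorem sq_norm_projGradStep_sub_le (hsc : FirstOrderStrongConvexOn X f μ)
    (hsm : FirstOrderSmoothOn X f α) (hxs : xs ∈ X)
    (hopt : ∀ v ∈ X, 0 ≤ ⟪gradient f xs, v - xs⟫) (hα : 0 < α) (hγ : 0 < γ)
    (hx : x ∈ X) (hg : ‖g - gradient f x‖ ≤ δ) (hy : y ∈ X)
    (hproj : ⟪(x - (1 / α) • g) - y, xs - y⟫ ≤ 0) :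
    (α + μ - γ) * ‖y - xs‖ ^ 2 ≤ (α - μ) * ‖x - xs‖ ^ 2 + δ ^ 2 / γ := by
  set B := ‖y - xs‖
  have hdescent : f y ≤ f x + ⟪gradient f x, y - x⟫ + α / 2 * ‖y - x‖ ^ 2 := hsm x hx y hy
  have hlower_x : f x + ⟪gradient f x, xs - x⟫ + μ / 2 * ‖x - xs‖ ^ 2 ≤ f xs := by
    simpa only [norm_sub_rev xs x] using hsc x hx xs hxs
  have hlower_xs : f xs + μ / 2 * B ^ 2 ≤ f y := by
    linarith [hsc xs hxs y hy, hopt y hy]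
  have hsplit : ⟪gradient f x, y - x⟫ = ⟪gradient f x, y - xs⟫ + ⟪gradient f x, xs - x⟫ := by
    rw [← inner_add_right, sub_add_sub_cancel]
  have herror : ⟪gradient f x, y - xs⟫ ≤ ⟪g, y - xs⟫ + δ * B := by
    have h := real_inner_le_norm (gradient f x - g) (y - xs)
    rw [inner_sub_left, ← norm_neg, neg_sub] at h
    nlinarith [norm_nonneg (y - xs)]
  have hyoung : δ * B ≤ γ / 2 * B ^ 2 + δ ^ 2 / (2 * γ) := by
    have h : 0 ≤ (γ * B - δ) ^ 2 / (2 * γ) := by positivity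
    have hid : (γ * B - δ) ^ 2 / (2 * γ) = γ / 2 * B ^ 2 + δ ^ 2 / (2 * γ) - δ * B := by
      field_simp; ring
    linarith
  have hhalf : δ ^ 2 / (2 * γ) = δ ^ 2 / γ / 2 := by ring
  linarith [two_mul_inner_le_of_projection hα hproj]

theorem norm_projGradStep_sub_le (hsc : FirstOrderStrongConvexOn X f μ)
    (hsm : FirstOrderSmoothOn X f α) (hxs : xs ∈ X)
    (hopt : ∀ v ∈ X, 0 ≤ ⟪gradient f xs, v - xs⟫) (hμα : μ ≤ α) (hγ : 0 < γ)
    (hγμ : γ < 2 * μ) (hδ : 0 ≤ δ) (hx : x ∈ X) (hg : ‖g - gradient f x‖ ≤ δ) (hy : y ∈ X)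
    (hproj : ⟪(x - (1 / α) • g) - y, xs - y⟫ ≤ 0) :
    ‖y - xs‖ ≤ √((α - μ) / (α + μ - γ)) * ‖x - xs‖ + √(1 / (γ * (α + μ - γ))) * δ := by
  have hd : 0 < α + μ - γ := by linarith
  have hkey := sq_norm_projGradStep_sub_le hsc hsm hxs hopt (by linarith) hγ hx hg hy hproj
  refine le_sqrt_mul_add_sqrt_mul (norm_nonneg _) (norm_nonneg _)
    (div_nonneg (by linarith) hd.le) (by positivity) hδ ?_
  have hid : (α - μ) / (α + μ - γ) * ‖x - xs‖ ^ 2 + 1 / (γ * (α + μ - γ)) * δ ^ 2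
      = ((α - μ) * ‖x - xs‖ ^ 2 + δ ^ 2 / γ) / (α + μ - γ) := by
    field_simp
  rw [hid, le_div_iff₀ hd]
  linarith

end ProjectedGradientStep

theorem stmt_6_general
    {E : Type*} [NormedAddCommGroup E] [InnerProductSpace ℝ E] [FiniteDimensional ℝ E]
    (X : Set E) (hXconv : Convex ℝ X)
    (f : E → ℝ) (hf : Differentiable ℝ f)
    (μ L : ℝ)
    (hsc : ∀ a ∈ X, ∀ b ∈ X,
      f a + ⟪gradient f a, b - a⟫ + μ / 2 * ‖b - a‖ ^ 2 ≤ f b)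
    (hsm : ∀ a ∈ X, ∀ b ∈ X,
      f b ≤ f a + ⟪gradient f a, b - a⟫ + L / 2 * ‖b - a‖ ^ 2)
    (xs : E) (hxsX : xs ∈ X) (hxs : ∀ x ∈ X, f xs ≤ f x)
    (α γ δ : ℝ) (hα : L ≤ α) (hγ0 : 0 < γ) (hγ : γ < 2 * μ) (hδ : 0 ≤ δ)
    (J : ℕ)
    (w : ℕ → E) (hw0 : w 0 ∈ X)
    (hstep : ∀ j, 1 ≤ j → j ≤ J → ∃ g : E,
      ‖g - gradient f (w (j - 1))‖ ≤ δ ∧ w j ∈ X ∧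
      ∀ v ∈ X, ‖(w (j - 1) - (1 / α) • g) - w j‖ ≤ ‖(w (j - 1) - (1 / α) • g) - v‖) :
    ‖w J - xs‖ ≤ Real.sqrt ((α - μ) / (α + μ - γ)) ^ J * ‖w 0 - xs‖
      + (1 - Real.sqrt ((α - μ) / (α + μ - γ)) ^ J)
          / (1 - Real.sqrt ((α - μ) / (α + μ - γ)))
        * Real.sqrt (1 / (γ * (α + μ - γ))) * δ := by
  set s := √((α - μ) / (α + μ - γ))
  set c := √(1 / (γ * (α + μ - γ))) * δ
  have hopt : ∀ v ∈ X, 0 ≤ ⟪gradient f xs, v - xs⟫ := fun v hv =>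
    IsMinOn.inner_gradient_sub_nonneg (isMinOn_iff.2 hxs) hXconv (hf xs) hxsX hv
  have hcontract : ∀ n < J, ‖w (n + 1) - xs‖ ≤ s * ‖w n - xs‖ + c := by
    intro n hn
    obtain ⟨g, hg, hwX, hproj⟩ := hstep (n + 1) n.succ_pos hn
    rw [Nat.add_sub_cancel] at hg hproj
    have hwnX : w n ∈ X := by
      cases n with
      | zero => exact hw0
      | succ m =>
        obtain ⟨-, -, hwmX, -⟩ := hstep (m + 1) m.succ_pos hn.le
        exact hwmX
    rcases le_or_gt μ α with hμα | hαμ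
    · exact norm_projGradStep_sub_le hsc (FirstOrderSmoothOn.mono hsm hα) hxsX hopt hμα hγ0 hγ
        hδ hwnX hg hwX (inner_sub_nonpos_of_forall_norm_sub_le hXconv hwX hproj hxsX)
    · have hX := FirstOrderStrongConvexOn.subsingleton_of_smoothOn_of_lt hsc hsm (hα.trans_lt hαμ)
      rw [hX hwX hxsX, sub_self, norm_zero]
      positivity
  have hgeom : ∑ i ∈ range J, s ^ i = (1 - s ^ J) / (1 - s) := by
    have hs1 : s ≠ 1 := by
      rw [Ne, Real.sqrt_eq_one]
      exact div_ne_one_of_lt_two_mul hγ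
    rw [geom_sum_eq hs1, ← neg_div_neg_eq, neg_sub, neg_sub]
  calc ‖w J - xs‖ ≤ s ^ J * ‖w 0 - xs‖ + (∑ i ∈ range J, s ^ i) * c :=
      le_pow_mul_add_geom_sum_mul (a := fun n => ‖w n - xs‖) (Real.sqrt_nonneg _) hcontract
    _ = _ := by rw [hgeom]; ring

/-- Square-root form of the multi-step inexact projected gradient descent bound:
`‖w_J − x*‖ ≤ (√η)^J ‖w₀ − x*‖ + ((1 − (√η)^J)/(1 − √η)) √β δ`, where
`η = (α − μ)/(α + μ - γ)` and `β = 1/(γ(α + μ − γ))`. -/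
theorem stmt_6
    {E : Type*} [NormedAddCommGroup E] [InnerProductSpace ℝ E] [FiniteDimensional ℝ E]
    (X : Set E) (hXne : X.Nonempty) (hXcp : IsCompact X) (hXconv : Convex ℝ X)
    (f : E → ℝ) (hf : Differentiable ℝ f)
    (μ L : ℝ) (hμ : 0 < μ) (hL : 0 < L)
    (hsc : ∀ a ∈ X, ∀ b ∈ X,
      f a + ⟪gradient f a, b - a⟫ + μ / 2 * ‖b - a‖ ^ 2 ≤ f b)
    (hsm : ∀ a ∈ X, ∀ b ∈ X,
      f b ≤ f a + ⟪gradient f a, b - a⟫ + L / 2 * ‖b - a‖ ^ 2)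
    (xs : E) (hxsX : xs ∈ X) (hxs : ∀ x ∈ X, f xs ≤ f x)
    (α γ δ : ℝ) (hα : L ≤ α) (hγ0 : 0 < γ) (hγ : γ < 2 * μ) (hδ : 0 ≤ δ)
    (J : ℕ) (hJ : 1 ≤ J)
    (w : ℕ → E) (hw0 : w 0 ∈ X)
    (hstep : ∀ j, 1 ≤ j → j ≤ J → ∃ g : E,
      ‖g - gradient f (w (j - 1))‖ ≤ δ ∧ w j ∈ X ∧
      ∀ v ∈ X, ‖(w (j - 1) - (1 / α) • g) - w j‖ ≤ ‖(w (j - 1) - (1 / α) • g) - v‖) :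
    ‖w J - xs‖ ≤ Real.sqrt ((α - μ) / (α + μ - γ)) ^ J * ‖w 0 - xs‖
      + (1 - Real.sqrt ((α - μ) / (α + μ - γ)) ^ J)
          / (1 - Real.sqrt ((α - μ) / (α + μ - γ)))
        * Real.sqrt (1 / (γ * (α + μ - γ))) * δ :=
  stmt_6_general X hXconv f hf μ L hsc hsm xs hxsX hxs α γ δ hα hγ0 hγ hδ J w hw0 hstep
end

section
/- In the HiOCO setting with non-zero local delay, if additionally 4η^{J_l+J_r} < 1, then for any ξ > 0 the dynamic regret satisfies: Σ_{t=1}^{T} (f_t(x_t) − f_t(x_t*)) ≤ (1/(2ξ)) Σ_{t=1}^{T} ‖∇f_t(x_t*)‖² + ((L + ξ)/2)·τ·R² + ((L + ξ)/(2(1 − 4η^{J_l+J_r}))) · ( τ·R² + 6τ²·Π₂* + (4β/(1 − η))·Δ₂ ), where τ = τ_l + τ_r is the total delay. -/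
/-!
One inexact projected gradient step `p = Proj_X (y - g / α)`, `‖g - ∇h y‖ ≤ δ`, on a `μ`-strongly
convex, `L`-smooth `h` contracts the squared distance to the minimiser `x*` of `h` on `X`:
`‖p - x*‖² ≤ η ‖y - x*‖² + β δ²`. Iterating this over the `J_r` master steps and the `J_l` worker
steps, and paying a factor `2` (`‖a - c‖² ≤ 2‖a - b‖² + 2‖b - c‖²`) each time the reference point
moves from `x*_{t-τ}` to `x*_{t-τ_l}` and then to `x*_t`, gives for `u_t = ‖x_t - x*_t‖²`
`u_t ≤ 4 η^{J_l+J_r} u_{t-τ} + O(δ²) + O(τ · squared path length over (t - τ, t])`.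
Summed over `t`, the `u_{t-τ}` terms are absorbed by the left-hand side because
`4 η^{J_l+J_r} < 1`, the first `τ` rounds cost at most `τ R²`, and each squared path increment lies
in at most `τ` windows. Finally, smoothness at `x*_t` and Young's inequality bound the regret of
round `t` by `‖∇f_t(x*_t)‖² / (2ξ) + (L + ξ) u_t / 2`.
-/

open scoped RealInnerProductSpace
open Finset

theorem two_mul_le_mul_sq_add_sq_div {ε : ℝ} (hε : 0 < ε) (a b : ℝ) :
    2 * (a * b) ≤ ε * a ^ 2 + b ^ 2 / ε := by
  have hsq : ε * a ^ 2 + b ^ 2 / ε - 2 * (a * b) = (ε * a - b) ^ 2 / ε := by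
    field_simp; ring
  rw [← sub_nonneg, hsq]
  positivity

theorem le_pow_mul_add_of_le_mul_add {a : ℕ → ℝ} {e c : ℝ} {J : ℕ} (he0 : 0 ≤ e) (he1 : e ≠ 1)
    (hstep : ∀ j, 1 ≤ j → j ≤ J → a j ≤ e * a (j - 1) + c) :
    a J ≤ e ^ J * a 0 + (1 - e ^ J) / (1 - e) * c := by
  have he1' : 1 - e ≠ 0 := sub_ne_zero.mpr he1.symm
  suffices ∀ j ≤ J, a j ≤ e ^ j * a 0 + (1 - e ^ j) / (1 - e) * c from this J le_rfl
  intro j hj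
  induction j with
  | zero => simp
  | succ j ih =>
    calc a (j + 1) ≤ e * a j + c := hstep (j + 1) (by omega) hj
      _ ≤ e * (e ^ j * a 0 + (1 - e ^ j) / (1 - e) * c) + c := by
        gcongr; exact ih (by omega)
      _ = e ^ (j + 1) * a 0 + (1 - e ^ (j + 1)) / (1 - e) * c := by
        field_simp; ring

theorem sum_Icc_comp_sub_le {g : ℕ → ℝ} (hg : ∀ s, 0 ≤ g s) {a b c k : ℕ} (hk : k ≤ a)
    (hc : c ≤ a - k) : ∑ t ∈ Icc a b, g (t - k) ≤ ∑ t ∈ Icc c b, g t := by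
  rw [← sum_image (g := (· - k)) fun s hs t ht hst => by
    simp only [coe_Icc, Set.mem_Icc] at hs ht hst; omega]
  refine sum_le_sum_of_subset_of_nonneg (fun s hs => ?_) fun s _ _ => hg s
  simp only [mem_image, mem_Icc] at hs ⊢
  obtain ⟨t, ht, rfl⟩ := hs
  omega

theorem sum_Icc_sum_range_le {g : ℕ → ℝ} (hg : ∀ s, 0 ≤ g s) {a b m : ℕ} (hm : m ≤ a) :
    ∑ t ∈ Icc a b, ∑ k ∈ range m, g (t - k) ≤ m * ∑ t ∈ Icc (a + 1 - m) b, g t := by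
  rw [sum_comm]
  calc ∑ k ∈ range m, ∑ t ∈ Icc a b, g (t - k)
      ≤ #(range m) • ∑ t ∈ Icc (a + 1 - m) b, g t :=
        sum_le_card_nsmul _ _ _ fun k hk => sum_Icc_comp_sub_le hg (by grind) (by grind)
    _ = m * ∑ t ∈ Icc (a + 1 - m) b, g t := by rw [card_range, nsmul_eq_mul]

theorem sum_le_of_delayed_recursion {u r : ℕ → ℝ} {τ T : ℕ} {q M : ℝ} (hτT : τ ≤ T)
    (hu : ∀ t, 0 ≤ u t) (hq0 : 0 ≤ q) (hq1 : q < 1) (hM : ∀ t ∈ Icc 1 τ, u t ≤ M)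
    (hrec : ∀ t ∈ Icc (τ + 1) T, u t ≤ q * u (t - τ) + r t) :
    ∑ t ∈ Icc 1 T, u t ≤ τ * M + (τ * M + ∑ t ∈ Icc (τ + 1) T, r t) / (1 - q) := by
  have hsplit : ∑ t ∈ Icc 1 T, u t = ∑ t ∈ Icc 1 τ, u t + ∑ t ∈ Icc (τ + 1) T, u t := by
    simp only [Icc_add_one_left_eq_Ioc]
    exact (sum_Ioc_consecutive u (Nat.zero_le τ) hτT).symm
  have hhead : ∑ t ∈ Icc 1 τ, u t ≤ τ * M := by
    simpa using sum_le_card_nsmul _ _ _ hM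
  have hhead0 : 0 ≤ ∑ t ∈ Icc 1 τ, u t := sum_nonneg fun t _ => hu t
  have htail : ∑ t ∈ Icc (τ + 1) T, u t
      ≤ q * ∑ t ∈ Icc 1 T, u t + ∑ t ∈ Icc (τ + 1) T, r t :=
    calc ∑ t ∈ Icc (τ + 1) T, u t ≤ ∑ t ∈ Icc (τ + 1) T, (q * u (t - τ) + r t) := sum_le_sum hrec
      _ = q * ∑ t ∈ Icc (τ + 1) T, u (t - τ) + ∑ t ∈ Icc (τ + 1) T, r t := by
        rw [sum_add_distrib, mul_sum]
      _ ≤ q * ∑ t ∈ Icc 1 T, u t + ∑ t ∈ Icc (τ + 1) T, r t := by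
        gcongr; exact sum_Icc_comp_sub_le hu (by omega) (by omega)
  rw [hsplit] at htail ⊢
  have htail' : ∑ t ∈ Icc (τ + 1) T, u t ≤ (τ * M + ∑ t ∈ Icc (τ + 1) T, r t) / (1 - q) := by
    rw [le_div_iff₀' (sub_pos.mpr hq1)]
    nlinarith
  linarith

theorem sum_le_of_delayed_round_bound {u δ w : ℕ → ℝ} (hu : ∀ t, 0 ≤ u t) (hw : ∀ s, 0 ≤ w s)
    {τ τl T : ℕ} (hτl : τl ≤ τ) (hτT : τ ≤ T) {q a C M : ℝ} (hq0 : 0 ≤ q) (hq1 : q < 1)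
    (ha0 : 0 ≤ a) (ha1 : a ≤ 1) (hC : 0 < C) (hM : ∀ t ∈ Icc 1 τ, u t ≤ M)
    (hrec : ∀ t ∈ Icc (τ + 1) T, u t ≤ q * u (t - τ)
      + (4 * a / C * δ (t - τ) ^ 2 + 2 * (1 - a) / C * δ (t - τl) ^ 2
        + 4 * τ * ∑ k ∈ range τ, w (t - k))) :
    ∑ t ∈ Icc 1 T, u t ≤ τ * M + (τ * M
      + (6 * τ ^ 2 * ∑ t ∈ Icc 2 T, w t + 4 / C * ∑ t ∈ Icc 1 T, δ t ^ 2)) / (1 - q) := by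
  refine (sum_le_of_delayed_recursion hτT hu hq0 hq1 hM hrec).trans ?_
  have hδ : ∀ s, 0 ≤ δ s ^ 2 := fun s => sq_nonneg _
  have h₁ := sum_Icc_comp_sub_le hδ (b := T) (Nat.le_succ τ) (by omega : 1 ≤ τ + 1 - τ)
  have h₂ := sum_Icc_comp_sub_le hδ (b := T) (by omega) (by omega : 1 ≤ τ + 1 - τl)
  have h₃ := sum_Icc_sum_range_le hw (b := T) (Nat.le_succ τ)
  rw [show τ + 1 + 1 - τ = 2 by omega] at h₃
  have hΔ : 0 ≤ ∑ t ∈ Icc 1 T, δ t ^ 2 := sum_nonneg fun t _ => hδ t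
  have hW : 0 ≤ ∑ t ∈ Icc 2 T, w t := sum_nonneg fun t _ => hw t
  gcongr τ * M + (τ * M + ?_) / _
  simp only [sum_add_distrib, ← mul_sum]
  have : 4 * a / C + 2 * (1 - a) / C ≤ 4 / C := by
    rw [← add_div]; gcongr; linarith
  nlinarith [mul_le_mul_of_nonneg_left h₁ (by positivity : 0 ≤ 4 * a / C),
    mul_le_mul_of_nonneg_left h₂ (div_nonneg (by linarith) hC.le : 0 ≤ 2 * (1 - a) / C),
    mul_le_mul_of_nonneg_left h₃ (by positivity : (0 : ℝ) ≤ 4 * τ),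
    mul_le_mul_of_nonneg_right this hΔ]

section NormedGroup

variable {E : Type*} [NormedAddCommGroup E]

theorem norm_sub_sq_le_two_mul_add (a b c : E) :
    ‖a - c‖ ^ 2 ≤ 2 * ‖a - b‖ ^ 2 + 2 * ‖b - c‖ ^ 2 :=
  calc ‖a - c‖ ^ 2 ≤ (‖a - b‖ + ‖b - c‖) ^ 2 := by
        gcongr; exact norm_sub_le_norm_sub_add_norm_sub a b c
    _ ≤ 2 * (‖a - b‖ ^ 2 + ‖b - c‖ ^ 2) := add_sq_le
    _ = _ := by ring

theorem norm_sub_sq_le_mul_sum_range (v : ℕ → E) (n m : ℕ) :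
    ‖v (n - m) - v n‖ ^ 2 ≤ m * ∑ k ∈ range m, ‖v (n - k) - v (n - k - 1)‖ ^ 2 := by
  have htri : ‖v (n - m) - v n‖ ≤ ∑ k ∈ range m, ‖v (n - k) - v (n - k - 1)‖ := by
    simpa [dist_eq_norm, Nat.sub_sub, norm_sub_rev] using
      dist_le_range_sum_dist (fun i => v (n - i)) m
  calc ‖v (n - m) - v n‖ ^ 2 ≤ (∑ k ∈ range m, ‖v (n - k) - v (n - k - 1)‖) ^ 2 := by gcongr
    _ ≤ _ := by
      simpa using sq_sum_le_card_mul_sum_sq (s := range m)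
        (f := fun k => ‖v (n - k) - v (n - k - 1)‖)

theorem norm_sub_sq_add_norm_sub_sq_le_mul_sum_range (v : ℕ → E) (n a b : ℕ) :
    ‖v (n - a) - v n‖ ^ 2 + ‖v (n - (a + b)) - v (n - a)‖ ^ 2 ≤
      ((a + b : ℕ) : ℝ) * ∑ k ∈ range (a + b), ‖v (n - k) - v (n - k - 1)‖ ^ 2 := by
  have h₁ := norm_sub_sq_le_mul_sum_range v n a
  have h₂ := norm_sub_sq_le_mul_sum_range v (n - a) b
  rw [sum_range_add]
  simp only [Nat.sub_sub] at h₁ h₂ ⊢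
  push_cast
  nlinarith [sum_nonneg fun k (_ : k ∈ range a) => sq_nonneg ‖v (n - k) - v (n - (k + 1))‖,
    sum_nonneg fun k (_ : k ∈ range b) => sq_nonneg ‖v (n - (a + k)) - v (n - (a + k + 1))‖]

end NormedGroup

section ProjectedGradient

variable {E : Type*} [NormedAddCommGroup E] [InnerProductSpace ℝ E] {X : Set E}

theorem real_inner_sub_le_zero_of_forall_norm_sub_le (hX : Convex ℝ X) {w p v : E}
    (hp : p ∈ X) (hmin : ∀ v ∈ X, ‖w - p‖ ≤ ‖w - v‖) (hv : v ∈ X) :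
    ⟪w - p, v - p⟫ ≤ 0 := by
  have : Nonempty X := ⟨⟨p, hp⟩⟩
  refine (norm_eq_iInf_iff_real_inner_le_zero hX hp).mp (le_antisymm ?_ ?_) v hv
  · exact le_ciInf fun u => hmin u u.2
  · exact ciInf_le ⟨0, by rintro _ ⟨u, rfl⟩; positivity⟩ (⟨p, hp⟩ : X)

variable [CompleteSpace E]

theorem IsMinOn.real_inner_gradient_nonneg (hX : Convex ℝ X) {h : E → ℝ} {a v : E}
    (hmin : IsMinOn h X a) (hd : DifferentiableAt ℝ h a) (ha : a ∈ X) (hv : v ∈ X) :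
    0 ≤ ⟪gradient h a, v - a⟫ := by
  rw [gradient, InnerProductSpace.toDual_symm_apply]
  exact hmin.localize.hasFDerivWithinAt_nonneg hd.hasFDerivAt.hasFDerivWithinAt
    (sub_mem_posTangentConeAt_of_segment_subset (hX.segment_subset ha hv))

theorem sum_sub_le_of_le_add_inner {s : Finset ℕ} {f : ℕ → E → ℝ} {x x' : ℕ → E} {L ξ : ℝ}
    (hξ : 0 < ξ) (hsm : ∀ t ∈ s, f t (x t)
      ≤ f t (x' t) + ⟪gradient (f t) (x' t), x t - x' t⟫ + L / 2 * ‖x t - x' t‖ ^ 2) :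
    ∑ t ∈ s, (f t (x t) - f t (x' t)) ≤ 1 / (2 * ξ) * ∑ t ∈ s, ‖gradient (f t) (x' t)‖ ^ 2
      + (L + ξ) / 2 * ∑ t ∈ s, ‖x t - x' t‖ ^ 2 := by
  rw [mul_sum, mul_sum, ← sum_add_distrib]
  refine sum_le_sum fun t ht => ?_
  have hcs := real_inner_le_norm (gradient (f t) (x' t)) (x t - x' t)
  have hyoung := two_mul_le_mul_sq_add_sq_div hξ ‖x t - x' t‖ ‖gradient (f t) (x' t)‖
  have : 1 / (2 * ξ) * ‖gradient (f t) (x' t)‖ ^ 2 = ‖gradient (f t) (x' t)‖ ^ 2 / ξ / 2 := by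
    ring
  linarith [hsm t ht]

structure IsSmoothStrongMinOn (X : Set E) (μ L : ℝ) (h : E → ℝ) (xs : E) : Prop where
  differentiableAt : DifferentiableAt ℝ h xs
  strongly_convex : ∀ a ∈ X, ∀ b ∈ X, h a + ⟪gradient h a, b - a⟫ + μ / 2 * ‖b - a‖ ^ 2 ≤ h b
  smooth : ∀ a ∈ X, ∀ b ∈ X, h b ≤ h a + ⟪gradient h a, b - a⟫ + L / 2 * ‖b - a‖ ^ 2
  mem : xs ∈ X
  isMinOn : IsMinOn h X xs

def IsInexactProjStep (X : Set E) (h : E → ℝ) (α δ : ℝ) (y p : E) : Prop :=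
  ∃ g : E, ‖g - gradient h y‖ ≤ δ ∧ p ∈ X ∧
    ∀ v ∈ X, ‖(y - (1 / α) • g) - p‖ ≤ ‖(y - (1 / α) • g) - v‖

variable {h : E → ℝ} {μ L α γ δ : ℝ} {xs : E}

/- Test the projection inequality with `v = x*`, bound `⟪∇h y, x* - p⟫` by strong convexity and
smoothness at `y`, use the quadratic growth `h x* + μ/2 ‖p - x*‖² ≤ h p`, and absorb the gradient
error by Young's inequality with weight `γ`. -/
theorem IsInexactProjStep.norm_sub_sq_le (hX : Convex ℝ X) (hμL : μ ≤ L) (hLα : L ≤ α)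
    (hγ0 : 0 < γ) (hγ : γ < 2 * μ) (hh : IsSmoothStrongMinOn X μ L h xs) {y p : E} (hy : y ∈ X)
    (hstep : IsInexactProjStep X h α δ y p) :
    ‖p - xs‖ ^ 2 ≤ (α - μ) / (α + μ - γ) * ‖y - xs‖ ^ 2 + 1 / (γ * (α + μ - γ)) * δ ^ 2 := by
  obtain ⟨g, hg, hp, hproj⟩ := hstep
  have hα : 0 < α := by linarith
  have hκ : 0 < α + μ - γ := by linarith
  set G := gradient h y
  have hpolar : 2 * ⟪y - p, xs - p⟫ = ‖y - p‖ ^ 2 + ‖p - xs‖ ^ 2 - ‖y - xs‖ ^ 2 := by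
    have := norm_sub_sq_real (y - p) (xs - p)
    rw [sub_sub_sub_cancel_right, norm_sub_rev xs p] at this
    linarith
  have hvi : α * (‖y - p‖ ^ 2 + ‖p - xs‖ ^ 2 - ‖y - xs‖ ^ 2) ≤ 2 * ⟪g, xs - p⟫ := by
    have hnear := real_inner_sub_le_zero_of_forall_norm_sub_le hX hp hproj hh.mem
    rw [sub_right_comm, inner_sub_left, real_inner_smul_left] at hnear
    have hnear' := mul_le_mul_of_nonneg_left hnear hα.le
    field_simp at hnear'
    rw [← hpolar]
    linarith
  have hsplit : ⟪g, xs - p⟫ = ⟪G, xs - y⟫ - ⟪G, p - y⟫ + ⟪g - G, xs - p⟫ := by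
    simp only [inner_sub_left, inner_sub_right]; ring
  have hlower := hh.strongly_convex y hy xs hh.mem
  have hupper := hh.smooth y hy p hp
  rw [norm_sub_rev xs y] at hlower
  rw [norm_sub_rev p y] at hupper
  have hgrowth : h xs + μ / 2 * ‖p - xs‖ ^ 2 ≤ h p := by
    have := hh.strongly_convex xs hh.mem p hp
    have := hh.isMinOn.real_inner_gradient_nonneg hX hh.differentiableAt hh.mem hp
    linarith
  have herr : ⟪g - G, xs - p⟫ ≤ δ * ‖p - xs‖ :=
    (real_inner_le_norm _ _).trans (by rw [norm_sub_rev xs p]; gcongr)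
  have hyoung := two_mul_le_mul_sq_add_sq_div hγ0 ‖p - xs‖ δ
  have hLα' : L * ‖y - p‖ ^ 2 ≤ α * ‖y - p‖ ^ 2 := by gcongr
  calc ‖p - xs‖ ^ 2 ≤ ((α - μ) * ‖y - xs‖ ^ 2 + δ ^ 2 / γ) / (α + μ - γ) := by
        rw [le_div_iff₀ hκ]; linarith
    _ = _ := by field_simp

theorem IsInexactProjStep.mem {y p : E} (hstep : IsInexactProjStep X h α δ y p) : p ∈ X :=
  let ⟨_, _, hp, _⟩ := hstep; hp

theorem mem_of_isInexactProjStep_chain {J : ℕ} {y : ℕ → E} (hy0 : y 0 ∈ X)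
    (hy : ∀ j, 1 ≤ j → j ≤ J → IsInexactProjStep X h α δ (y (j - 1)) (y j)) {j : ℕ}
    (hj : j ≤ J) : y j ∈ X := by
  rcases j with _ | j
  · exact hy0
  · exact (hy (j + 1) (by omega) hj).mem

theorem norm_sub_sq_le_of_isInexactProjStep_chain (hX : Convex ℝ X) (hμL : μ ≤ L) (hLα : L ≤ α)
    (hγ0 : 0 < γ) (hγ : γ < 2 * μ) (hh : IsSmoothStrongMinOn X μ L h xs) {J : ℕ} {y : ℕ → E}
    (hy0 : y 0 ∈ X) (hy : ∀ j, 1 ≤ j → j ≤ J → IsInexactProjStep X h α δ (y (j - 1)) (y j)) :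
    ‖y J - xs‖ ^ 2 ≤ ((α - μ) / (α + μ - γ)) ^ J * ‖y 0 - xs‖ ^ 2
      + (1 - ((α - μ) / (α + μ - γ)) ^ J) / (γ * (2 * μ - γ)) * δ ^ 2 := by
  have hκ : 0 < α + μ - γ := by linarith
  have hη0 : 0 ≤ (α - μ) / (α + μ - γ) := div_nonneg (by linarith) hκ.le
  have hη1 : (α - μ) / (α + μ - γ) ≠ 1 := by
    rw [Ne, div_eq_one_iff_eq hκ.ne']; linarith
  have hchain := le_pow_mul_add_of_le_mul_add (a := fun j => ‖y j - xs‖ ^ 2) (J := J) hη0 hη1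
    fun j hj1 hj2 => (hy j hj1 hj2).norm_sub_sq_le hX hμL hLα hγ0 hγ hh
      (mem_of_isInexactProjStep_chain hy0 hy (by omega))
  refine hchain.trans_eq ?_
  -- `β / (1 - η) = 1 / (γ (2μ - γ))`, since `(1 - η) (α + μ - γ) = 2μ - γ`
  have : 2 * μ - γ ≠ 0 := by linarith
  field_simp
  ring

theorem norm_sub_sq_le_of_two_stage_chain (hX : Convex ℝ X) (hμL : μ ≤ L) (hLα : L ≤ α)
    (hγ0 : 0 < γ) (hγ : γ < 2 * μ) {f₁ f₂ : E → ℝ} {p₁ p₂ p₃ : E} {δ₁ δ₂ : ℝ}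
    (h₁ : IsSmoothStrongMinOn X μ L f₁ p₁) (h₂ : IsSmoothStrongMinOn X μ L f₂ p₂)
    {Jr Jl : ℕ} {y z : ℕ → E} (hy0 : y 0 ∈ X)
    (hy : ∀ j, 1 ≤ j → j ≤ Jr → IsInexactProjStep X f₁ α δ₁ (y (j - 1)) (y j))
    (hz0 : z 0 = y Jr)
    (hz : ∀ j, 1 ≤ j → j ≤ Jl → IsInexactProjStep X f₂ α δ₂ (z (j - 1)) (z j)) :
    ‖z Jl - p₃‖ ^ 2 ≤ 4 * ((α - μ) / (α + μ - γ)) ^ (Jl + Jr) * ‖y 0 - p₁‖ ^ 2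
      + 4 * ((α - μ) / (α + μ - γ)) ^ Jl / (γ * (2 * μ - γ)) * δ₁ ^ 2
      + 2 * (1 - ((α - μ) / (α + μ - γ)) ^ Jl) / (γ * (2 * μ - γ)) * δ₂ ^ 2
      + 4 * (‖p₁ - p₂‖ ^ 2 + ‖p₂ - p₃‖ ^ 2) := by
  have hmaster := norm_sub_sq_le_of_isInexactProjStep_chain hX hμL hLα hγ0 hγ h₁ hy0 hy
  have hworker := norm_sub_sq_le_of_isInexactProjStep_chain hX hμL hLα hγ0 hγ h₂
    (hz0 ▸ mem_of_isInexactProjStep_chain hy0 hy le_rfl) hz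
  set η := (α - μ) / (α + μ - γ)
  have hη0 : 0 ≤ η := div_nonneg (by linarith) (by linarith)
  have hη1 : η ≤ 1 := div_le_one_of_le₀ (by linarith) (by linarith)
  have ha0 : 0 ≤ η ^ Jl := pow_nonneg hη0 _
  have ha1 : η ^ Jl ≤ 1 := pow_le_one₀ hη0 hη1
  have hb0 : 0 ≤ η ^ Jr := pow_nonneg hη0 _
  have hD : 0 < γ * (2 * μ - γ) := mul_pos hγ0 (by linarith)
  set D := γ * (2 * μ - γ)
  rw [hz0] at hworker
  have hmove₂ := norm_sub_sq_le_two_mul_add (z Jl) p₂ p₃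
  have hmove₁ := mul_le_mul_of_nonneg_left (norm_sub_sq_le_two_mul_add (y Jr) p₁ p₂) ha0
  have hmaster' := mul_le_mul_of_nonneg_left hmaster ha0
  have hδ₁ : η ^ Jl * ((1 - η ^ Jr) / D * δ₁ ^ 2) ≤ η ^ Jl * δ₁ ^ 2 / D := by
    rw [div_mul_eq_mul_div, mul_div_assoc']
    gcongr
    nlinarith
  have hp₁₂ : η ^ Jl * ‖p₁ - p₂‖ ^ 2 ≤ ‖p₁ - p₂‖ ^ 2 := mul_le_of_le_one_left (by positivity) ha1
  rw [pow_add]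
  linear_combination hmove₂ + 2 * hworker + 2 * hmove₁ + 4 * hmaster' + 4 * hδ₁ + 4 * hp₁₂
    + 2 * sq_nonneg ‖p₂ - p₃‖

end ProjectedGradient

theorem stmt_15_general
    {E : Type*} [NormedAddCommGroup E] [InnerProductSpace ℝ E] [FiniteDimensional ℝ E]
    (X : Set E) (hXconv : Convex ℝ X)
    (R : ℝ) (hR : ∀ a ∈ X, ∀ b ∈ X, ‖a - b‖ ≤ R)
    (T τl τr Jr Jl : ℕ) (hτT : τl + τr < T)
    (μ L α γ : ℝ) (hμL : μ ≤ L) (hLα : L ≤ α)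
    (hγ0 : 0 < γ) (hγ : γ < 2 * μ)
    (f : ℕ → E → ℝ) (hdiff : ∀ t, 1 ≤ t → t ≤ T → Differentiable ℝ (f t))
    (hsc : ∀ t, 1 ≤ t → t ≤ T → ∀ a ∈ X, ∀ b ∈ X,
      f t a + ⟪gradient (f t) a, b - a⟫ + μ / 2 * ‖b - a‖ ^ 2 ≤ f t b)
    (hsm : ∀ t, 1 ≤ t → t ≤ T → ∀ a ∈ X, ∀ b ∈ X,
      f t b ≤ f t a + ⟪gradient (f t) a, b - a⟫ + L / 2 * ‖b - a‖ ^ 2)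
    (xstar : ℕ → E) (hxsX : ∀ t, 1 ≤ t → t ≤ T → xstar t ∈ X)
    (hxsmin : ∀ t, 1 ≤ t → t ≤ T → ∀ x ∈ X, f t (xstar t) ≤ f t x)
    (δ : ℕ → ℝ)
    (x : ℕ → E) (hxX : ∀ t, 1 ≤ t → t ≤ T → x t ∈ X)
    (hiter : ∀ t, τl + τr < t → t ≤ T → ∃ y z : ℕ → E,
      y 0 = x (t - (τl + τr)) ∧
      (∀ j, 1 ≤ j → j ≤ Jr → ∃ g : E,
        ‖g - gradient (f (t - (τl + τr))) (y (j - 1))‖ ≤ δ (t - (τl + τr)) ∧ y j ∈ X ∧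
        ∀ v ∈ X, ‖(y (j - 1) - (1 / α) • g) - y j‖ ≤ ‖(y (j - 1) - (1 / α) • g) - v‖) ∧
      z 0 = y Jr ∧
      (∀ j, 1 ≤ j → j ≤ Jl → ∃ g : E,
        ‖g - gradient (f (t - τl)) (z (j - 1))‖ ≤ δ (t - τl) ∧ z j ∈ X ∧
        ∀ v ∈ X, ‖(z (j - 1) - (1 / α) • g) - z j‖ ≤ ‖(z (j - 1) - (1 / α) • g) - v‖) ∧
      x t = z Jl)
    (hη : 4 * ((α - μ) / (α + μ - γ)) ^ (Jl + Jr) < 1)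
    (ξ : ℝ) (hξ : 0 < ξ) :
    ∑ t ∈ Finset.Icc 1 T, (f t (x t) - f t (xstar t))
      ≤ 1 / (2 * ξ) * ∑ t ∈ Finset.Icc 1 T, ‖gradient (f t) (xstar t)‖ ^ 2
        + (L + ξ) / 2 * ((τl + τr : ℕ) : ℝ) * R ^ 2
        + (L + ξ) / (2 * (1 - 4 * ((α - μ) / (α + μ - γ)) ^ (Jl + Jr)))
          * (((τl + τr : ℕ) : ℝ) * R ^ 2
            + 6 * ((τl + τr : ℕ) : ℝ) ^ 2
              * ∑ t ∈ Finset.Icc 2 T, ‖xstar t - xstar (t - 1)‖ ^ 2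
            + 4 * (1 / (γ * (α + μ - γ))) / (1 - (α - μ) / (α + μ - γ))
              * ∑ t ∈ Finset.Icc 1 T, (δ t) ^ 2) := by
  generalize hτ : τl + τr = τ at hτT hiter ⊢
  generalize hη_def : (α - μ) / (α + μ - γ) = η at hη ⊢
  have hκ : 0 < α + μ - γ := by linarith
  have hη0 : 0 ≤ η := hη_def ▸ div_nonneg (by linarith) hκ.le
  have hηJ1 : η ^ Jl ≤ 1 := pow_le_one₀ hη0 (hη_def ▸ (div_le_one hκ).mpr (by linarith))
  have hloss : ∀ t, 1 ≤ t → t ≤ T → IsSmoothStrongMinOn X μ L (f t) (xstar t) := fun t h₁ h₂ =>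
    ⟨(hdiff t h₁ h₂).differentiableAt, hsc t h₁ h₂, hsm t h₁ h₂, hxsX t h₁ h₂,
      isMinOn_iff.mpr (hxsmin t h₁ h₂)⟩
  have hround : ∀ t ∈ Icc (τ + 1) T, ‖x t - xstar t‖ ^ 2
      ≤ 4 * η ^ (Jl + Jr) * ‖x (t - τ) - xstar (t - τ)‖ ^ 2
        + (4 * η ^ Jl / (γ * (2 * μ - γ)) * δ (t - τ) ^ 2
          + 2 * (1 - η ^ Jl) / (γ * (2 * μ - γ)) * δ (t - τl) ^ 2
          + 4 * τ * ∑ k ∈ range τ, ‖xstar (t - k) - xstar (t - k - 1)‖ ^ 2) := by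
    intro t ht
    rw [mem_Icc] at ht
    obtain ⟨y, z, hy0, hy, hz0, hz, hxt⟩ := hiter t (by omega) ht.2
    have hstage := norm_sub_sq_le_of_two_stage_chain hXconv hμL hLα hγ0 hγ
      (hloss (t - τ) (by omega) (by omega)) (hloss (t - τl) (by omega) (by omega))
      (hy0 ▸ hxX _ (by omega) (by omega)) hy hz0 hz (p₃ := xstar t)
    have hpath := norm_sub_sq_add_norm_sub_sq_le_mul_sum_range xstar t τl τr
    rw [← hxt, hy0, hη_def] at hstage
    rw [hτ] at hpath
    linarith
  have hC : 0 < γ * (2 * μ - γ) := mul_pos hγ0 (by linarith)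
  have hU := sum_le_of_delayed_round_bound (M := R ^ 2) (fun t => sq_nonneg _)
    (fun s => sq_nonneg ‖xstar s - xstar (s - 1)‖) (by omega : τl ≤ τ) hτT.le (by positivity) hη
    (pow_nonneg hη0 Jl) hηJ1 hC (fun t ht => by
      rw [mem_Icc] at ht
      have := hR _ (hxX t ht.1 (by omega)) _ (hxsX t ht.1 (by omega))
      gcongr) hround
  have hβ : 4 * (1 / (γ * (α + μ - γ))) / (1 - η) = 4 / (γ * (2 * μ - γ)) := by
    have : 2 * μ - γ ≠ 0 := by linarith
    rw [← hη_def]; field_simp; ring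
  have hLξ : 0 ≤ (L + ξ) / 2 := by linarith
  refine (sum_sub_le_of_le_add_inner (L := L) hξ fun t ht => ?_).trans ?_
  · rw [mem_Icc] at ht
    exact hsm t ht.1 ht.2 _ (hxsX t ht.1 ht.2) _ (hxX t ht.1 ht.2)
  refine (add_le_add le_rfl (mul_le_mul_of_nonneg_left hU hLξ)).trans_eq ?_
  rw [← div_div (L + ξ), hβ]
  ring

/-- Theorem 2(ii) of the paper: squared-variation dynamic regret bound for
HiOCO with non-zero local delay `τ_l ≥ 1`, remote delay `τ_r ≥ 1`, and total
delay `τ = τ_l + τ_r`. With `η = (α − μ)/(α + μ − γ)` and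
`β = 1/(γ(α + μ − γ))`, if `4η^{J_l+J_r} < 1` then for any `ξ > 0`,
`Σ_{t=1}^{T} (f_t(x_t) − f_t(x_t*)) ≤ (1/(2ξ)) Σ_t ‖∇f_t(x_t*)‖²
  + ((L+ξ)/2)τR² + ((L+ξ)/(2(1 − 4η^{J_l+J_r})))(τR² + 6τ²Π₂* + (4β/(1−η))Δ₂)`. -/
theorem stmt_15
    {E : Type*} [NormedAddCommGroup E] [InnerProductSpace ℝ E] [FiniteDimensional ℝ E]
    (X : Set E) (hXne : X.Nonempty) (hXcp : IsCompact X) (hXconv : Convex ℝ X)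
    (R : ℝ) (hR : ∀ a ∈ X, ∀ b ∈ X, ‖a - b‖ ≤ R)
    (T τl τr Jr Jl : ℕ) (hT : 1 ≤ T) (hτl : 1 ≤ τl) (hτr : 1 ≤ τr)
    (hτT : τl + τr < T) (hJ : 1 ≤ Jr + Jl)
    (μ L α γ : ℝ) (hμ : 0 < μ) (hμL : μ ≤ L) (hLα : L ≤ α)
    (hγ0 : 0 < γ) (hγ : γ < 2 * μ)
    (f : ℕ → E → ℝ) (hdiff : ∀ t, 1 ≤ t → t ≤ T → Differentiable ℝ (f t))
    (hsc : ∀ t, 1 ≤ t → t ≤ T → ∀ a ∈ X, ∀ b ∈ X,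
      f t a + ⟪gradient (f t) a, b - a⟫ + μ / 2 * ‖b - a‖ ^ 2 ≤ f t b)
    (hsm : ∀ t, 1 ≤ t → t ≤ T → ∀ a ∈ X, ∀ b ∈ X,
      f t b ≤ f t a + ⟪gradient (f t) a, b - a⟫ + L / 2 * ‖b - a‖ ^ 2)
    (D : ℝ) (hD : ∀ t, 1 ≤ t → t ≤ T → ∀ x ∈ X, ‖gradient (f t) x‖ ≤ D)
    (xstar : ℕ → E) (hxsX : ∀ t, 1 ≤ t → t ≤ T → xstar t ∈ X)
    (hxsmin : ∀ t, 1 ≤ t → t ≤ T → ∀ x ∈ X, f t (xstar t) ≤ f t x)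
    (δ : ℕ → ℝ) (hδ : ∀ t, 1 ≤ t → t ≤ T → 0 ≤ δ t)
    (x : ℕ → E) (hxX : ∀ t, 1 ≤ t → t ≤ T → x t ∈ X)
    (hiter : ∀ t, τl + τr < t → t ≤ T → ∃ y z : ℕ → E,
      y 0 = x (t - (τl + τr)) ∧
      (∀ j, 1 ≤ j → j ≤ Jr → ∃ g : E,
        ‖g - gradient (f (t - (τl + τr))) (y (j - 1))‖ ≤ δ (t - (τl + τr)) ∧ y j ∈ X ∧
        ∀ v ∈ X, ‖(y (j - 1) - (1 / α) • g) - y j‖ ≤ ‖(y (j - 1) - (1 / α) • g) - v‖) ∧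
      z 0 = y Jr ∧
      (∀ j, 1 ≤ j → j ≤ Jl → ∃ g : E,
        ‖g - gradient (f (t - τl)) (z (j - 1))‖ ≤ δ (t - τl) ∧ z j ∈ X ∧
        ∀ v ∈ X, ‖(z (j - 1) - (1 / α) • g) - z j‖ ≤ ‖(z (j - 1) - (1 / α) • g) - v‖) ∧
      x t = z Jl)
    (hη : 4 * ((α - μ) / (α + μ - γ)) ^ (Jl + Jr) < 1)
    (ξ : ℝ) (hξ : 0 < ξ) :
    ∑ t ∈ Finset.Icc 1 T, (f t (x t) - f t (xstar t))
      ≤ 1 / (2 * ξ) * ∑ t ∈ Finset.Icc 1 T, ‖gradient (f t) (xstar t)‖ ^ 2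
        + (L + ξ) / 2 * ((τl + τr : ℕ) : ℝ) * R ^ 2
        + (L + ξ) / (2 * (1 - 4 * ((α - μ) / (α + μ - γ)) ^ (Jl + Jr)))
          * (((τl + τr : ℕ) : ℝ) * R ^ 2
            + 6 * ((τl + τr : ℕ) : ℝ) ^ 2
              * ∑ t ∈ Finset.Icc 2 T, ‖xstar t - xstar (t - 1)‖ ^ 2
            + 4 * (1 / (γ * (α + μ - γ))) / (1 - (α - μ) / (α + μ - γ))
              * ∑ t ∈ Finset.Icc 1 T, (δ t) ^ 2) :=
  stmt_15_general X hXconv R hR T τl τr Jr Jl hτT μ L α γ hμL hLα hγ0 hγ f hdiff hsc hsm xstar hxsX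
    hxsmin δ x hxX hiter hη ξ hξ
end
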